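/- arXiv:2212.07371 — 14 statements merged into one kernel-verified Lean document; each statement's English description precedes it below -/
import Mathlib

section
/- Let a : ℕ → ℝ satisfy a(3) = 5/2 and the recurrence a(N+1) = (1 - 2/N)·a(N) + N + 1/2 for all integers N ≥ 3. Then a(N) = N(3N+1)/12 for all integers N ≥ 3, and consequently a(N) - (N/2)² = N/12 for all integers N ≥ 3. (These are the second moment and the variance of the number of degree-one vertices in a random recursive hypergraph of size N.) -/
/-- The second moment and variance of the number of degree-one vertices in an RRH. -/
theorem rrh_degree_one_second_moment (a : ℕ → ℝ) (h3 : a 3 = 5 / 2)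
    (hrec : ∀ N : ℕ, 3 ≤ N → a (N + 1) = (1 - 2 / (N : ℝ)) * a N + (N : ℝ) + 1 / 2) :
    (∀ N : ℕ, 3 ≤ N → a N = (N : ℝ) * (3 * (N : ℝ) + 1) / 12) ∧
    (∀ N : ℕ, 3 ≤ N → a N - ((N : ℝ) / 2) ^ 2 = (N : ℝ) / 12) := by
  have key : ∀ N : ℕ, 3 ≤ N → a N = (N : ℝ) * (3 * (N : ℝ) + 1) / 12 := by
    intro N hN
    induction N with
    | zero => omega
    | succ n ih =>
      rcases Nat.lt_or_ge n 3 with h | h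
      · interval_cases n
        · omega
        · omega
        · norm_num [h3]
      · have hn : (n : ℝ) ≠ 0 := by positivity
        rw [hrec n h, ih h]
        push_cast
        field_simp
        ring
  refine ⟨key, fun N hN => ?_⟩
  rw [key N hN]; ring
end

section
/- Let a : ℕ → ℝ satisfy a(3) = 9/2 and the recurrence a(N+1) = (1 - 3/N)·a(N) + (N+1)(3N+1)/4 for all integers N ≥ 3. Then a(N) = N²(N+1)/8 for all integers N ≥ 3, and consequently the third cumulant vanishes: a(N) - 3·(N(3N+1)/12)·(N/2) + 2·(N/2)³ = 0 for all integers N ≥ 3. (This is the third moment of the number of degree-one vertices in a random recursive hypergraph, whose third cumulant vanishes identically.) -/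
/-- The third moment of the number of degree-one vertices in an RRH; the third
cumulant vanishes identically. -/
theorem rrh_degree_one_third_moment (a : ℕ → ℝ) (h3 : a 3 = 9 / 2)
    (hrec : ∀ N : ℕ, 3 ≤ N →
      a (N + 1) = (1 - 3 / (N : ℝ)) * a N + ((N : ℝ) + 1) * (3 * (N : ℝ) + 1) / 4) :
    (∀ N : ℕ, 3 ≤ N → a N = (N : ℝ) ^ 2 * ((N : ℝ) + 1) / 8) ∧
    (∀ N : ℕ, 3 ≤ N →
      a N - 3 * ((N : ℝ) * (3 * (N : ℝ) + 1) / 12) * ((N : ℝ) / 2)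
        + 2 * ((N : ℝ) / 2) ^ 3 = 0) := by
  have key : ∀ N : ℕ, 3 ≤ N → a N = (N : ℝ) ^ 2 * ((N : ℝ) + 1) / 8 := by
    intro N hN
    induction N with
    | zero => omega
    | succ n ih =>
      rcases Nat.lt_or_ge n 3 with h | h
      · interval_cases n
        · omega
        · omega
        · simp only [h3]; norm_num
      · have hn : (n : ℝ) ≠ 0 := by positivity
        rw [hrec n h, ih h]
        push_cast
        field_simp
        ring
  refine ⟨key, fun N hN => ?_⟩
  rw [key N hN]; ring
end

section
/- Let a : ℕ → ℝ satisfy a(3) = 17/2 and the recurrence a(N+1) = (1 - 4/N)·a(N) + (6N³ + 15N² + 9N + 2)/12 for all integers N ≥ 3. Then a(N) = N(15N³ + 30N² + 5N - 2)/240 for all integers N ≥ 5, and consequently the fourth cumulant equals a(N) - 4·(N²(N+1)/8)·(N/2) - 3·(N(3N+1)/12)² + 12·(N(3N+1)/12)·(N/2)² - 6·(N/2)⁴ = -N/120 for all integers N ≥ 5. (This is the fourth moment of the number of degree-one vertices in a random recursive hypergraph, with fourth cumulant -N/120.) -/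
/-- The fourth moment of the number of degree-one vertices in an RRH; the fourth
cumulant equals `-N/120`. -/
theorem rrh_degree_one_fourth_moment (a : ℕ → ℝ) (h3 : a 3 = 17 / 2)
    (hrec : ∀ N : ℕ, 3 ≤ N →
      a (N + 1) = (1 - 4 / (N : ℝ)) * a N
        + (6 * (N : ℝ) ^ 3 + 15 * (N : ℝ) ^ 2 + 9 * (N : ℝ) + 2) / 12) :
    (∀ N : ℕ, 5 ≤ N →
      a N = (N : ℝ) * (15 * (N : ℝ) ^ 3 + 30 * (N : ℝ) ^ 2 + 5 * (N : ℝ) - 2) / 240) ∧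
    (∀ N : ℕ, 5 ≤ N →
      a N - 4 * ((N : ℝ) ^ 2 * ((N : ℝ) + 1) / 8) * ((N : ℝ) / 2)
        - 3 * ((N : ℝ) * (3 * (N : ℝ) + 1) / 12) ^ 2
        + 12 * ((N : ℝ) * (3 * (N : ℝ) + 1) / 12) * ((N : ℝ) / 2) ^ 2
        - 6 * ((N : ℝ) / 2) ^ 4 = -(N : ℝ) / 120) := by
  have h4 : a 4 = 73 / 3 := by
    have := hrec 3 le_rfl
    rw [h3] at this
    norm_num at this
    linarith
  have h5 : a 5 = 331 / 6 := by
    have := hrec 4 (by norm_num)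
    rw [h4] at this
    norm_num at this
    linarith
  have main : ∀ N : ℕ, 5 ≤ N →
      a N = (N : ℝ) * (15 * (N : ℝ) ^ 3 + 30 * (N : ℝ) ^ 2 + 5 * (N : ℝ) - 2) / 240 := by
    intro N hN
    induction N with
    | zero => omega
    | succ n ih =>
      rcases Nat.lt_or_ge n 5 with h | h
      · interval_cases n
        · omega
        · omega
        · omega
        · omega
        · rw [h5]; norm_num
      · have hn3 : 3 ≤ n := by omega
        have hrecn := hrec n hn3
        rw [ih (by omega)] at hrecn
        have hn0 : (n : ℝ) ≠ 0 := by positivity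
        rw [hrecn]
        push_cast
        field_simp
        ring
  refine ⟨main, fun N hN => ?_⟩
  rw [main N hN]
  ring
end

section
/- Let P : ℕ × ℕ → ℝ satisfy: P(1,2) = 1 and P(n,2) = 0 for n ≠ 1; P(0,N) = 0 for all N; and the recurrence P(n+1, N+1) = (1 - n/N)·P(n,N) + ((n+1)/N)·P(n+1,N) for all integers N ≥ 2 and n ≥ 0. Then for all integers N ≥ 2 and 1 ≤ n ≤ N-1, P(n,N) = (1/(N-1)!) · ∑_{j=0}^{n-1} (-1)^j · C(N, j) · (n - j)^{N-1}, i.e., P(n,N) equals the Eulerian number ⟨N-1 choose n-1⟩ divided by (N-1)!. -/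
open Finset

private lemma choose_real (N i : ℕ) :
    ((i:ℝ)+1) * (N.choose (i+1) : ℝ) = ((N:ℝ) - i) * (N.choose i : ℝ) := by
  rcases le_or_gt i N with h | h
  · have h1 := Nat.choose_succ_right_eq N i
    have h2 := congrArg (Nat.cast (R := ℝ)) h1
    push_cast [Nat.cast_sub h] at h2
    linarith
  · rw [Nat.choose_eq_zero_of_lt h, Nat.choose_eq_zero_of_lt (by omega)]
    simp

private lemma key (M k : ℕ) :
    ∑ j ∈ range (k+1), (-1:ℝ)^j * ((M+2).choose j : ℝ) * ((k:ℝ)+1-j)^(M+1)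
      = ((k:ℝ)+1) * ∑ j ∈ range (k+1), (-1:ℝ)^j * ((M+1).choose j : ℝ) * ((k:ℝ)+1-j)^M
        + ((M:ℝ)+1-k) * ∑ j ∈ range k, (-1:ℝ)^j * ((M+1).choose j : ℝ) * ((k:ℝ)-j)^M := by
  rw [Finset.sum_range_succ', Finset.sum_range_succ'
    (fun j => (-1:ℝ)^j * ((M+1).choose j : ℝ) * ((k:ℝ)+1-j)^M)]
  have hterm : ∀ i ∈ range k,
      (-1:ℝ)^(i+1) * ((M+2).choose (i+1) : ℝ) * ((k:ℝ)+1-(i+1))^(M+1)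
        = ((k:ℝ)+1) * ((-1:ℝ)^(i+1) * ((M+1).choose (i+1) : ℝ) * ((k:ℝ)+1-(i+1))^M)
          + ((M:ℝ)+1-k) * ((-1:ℝ)^i * ((M+1).choose i : ℝ) * ((k:ℝ)-i)^M) := by
    intro i _
    have hp : ((M+2).choose (i+1) : ℝ) = ((M+1).choose i : ℝ) + ((M+1).choose (i+1) : ℝ) := by
      exact_mod_cast Nat.choose_succ_succ (M+1) i
    have hc := choose_real (M+1) i
    push_cast at hc
    have hx : (k:ℝ)+1-((i:ℝ)+1) = (k:ℝ)-i := by ring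
    rw [hx, hp]
    linear_combination ((-1:ℝ)^i * ((k:ℝ)-(i:ℝ))^M) * hc
  push_cast
  rw [Finset.sum_congr rfl hterm, Finset.sum_add_distrib, ← Finset.mul_sum, ← Finset.mul_sum]
  simp only [Nat.choose_zero_right, Nat.cast_one, Nat.cast_zero, pow_zero]
  ring

private lemma base2 (n : ℕ) (hn : 2 ≤ n) :
    ∑ j ∈ range n, (-1:ℝ)^j * ((2:ℕ).choose j : ℝ) * ((n:ℝ)-j)^1 = 0 := by
  rcases Nat.lt_or_ge n 3 with h | h
  · interval_cases n
    · norm_num [Finset.sum_range_succ]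
  · rw [← Finset.sum_subset (Finset.range_subset_range.mpr h)]
    · simp [Finset.sum_range_succ]
      ring
    · intro j _ hj
      simp only [Finset.mem_range, not_lt] at hj
      rw [Nat.choose_eq_zero_of_lt (by omega)]
      ring

/-- The probability distribution of the number of degree-one vertices in an RRH is
given by Eulerian numbers: `P(n,N) = ⟨N-1, n-1⟩ / (N-1)!`, with the Eulerian number
written via its explicit alternating-sum formula. -/
theorem rrh_degree_one_distribution_eulerian (P : ℕ × ℕ → ℝ)
    (hinit : P (1, 2) = 1) (hinit' : ∀ n : ℕ, n ≠ 1 → P (n, 2) = 0)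
    (hzero : ∀ N : ℕ, P (0, N) = 0)
    (hrec : ∀ N : ℕ, 2 ≤ N → ∀ n : ℕ,
      P (n + 1, N + 1) = (1 - (n : ℝ) / N) * P (n, N) + ((n : ℝ) + 1) / N * P (n + 1, N)) :
    ∀ N : ℕ, 2 ≤ N → ∀ n : ℕ, 1 ≤ n → n ≤ N - 1 →
      P (n, N) = (1 / ((N - 1).factorial : ℝ)) *
        ∑ j ∈ Finset.range n, (-1 : ℝ) ^ j * (N.choose j : ℝ) * ((n : ℝ) - (j : ℝ)) ^ (N - 1) := by
  have claim : ∀ N : ℕ, 2 ≤ N → ∀ n : ℕ,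
      P (n, N) = (1 / ((N - 1).factorial : ℝ)) *
        ∑ j ∈ Finset.range n, (-1 : ℝ) ^ j * (N.choose j : ℝ) * ((n : ℝ) - (j : ℝ)) ^ (N - 1) := by
    intro N hN
    induction N, hN using Nat.le_induction with
    | base =>
      intro n
      rcases n with _ | _ | m
      · simp [hzero]
      · rw [hinit]
        norm_num
      · rw [hinit' (m+2) (by omega)]
        rw [base2 (m+2) (by omega)]
        norm_num
    | succ N hN ih =>
      intro n
      obtain ⟨M, rfl⟩ : ∃ M, N = M + 1 := ⟨N - 1, by omega⟩
      rcases n with _ | m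
      · simp [hzero]
      · rw [hrec (M+1) hN m, ih m, ih (m+1)]
        have hkey := key M m
        have hM : ((M:ℝ) + 1) ≠ 0 := by positivity
        have hf : ((M.factorial : ℝ)) ≠ 0 := by
          exact_mod_cast M.factorial_ne_zero
        simp only [Nat.add_sub_cancel] at *
        have hS : ∑ j ∈ Finset.range (m+1), (-1 : ℝ) ^ j * ((M+2).choose j : ℝ) *
            (((m:ℝ)+1) - (j : ℝ)) ^ (M+1)
            = ((m:ℝ)+1) * ∑ j ∈ range (m+1), (-1:ℝ)^j * ((M+1).choose j : ℝ) * ((m:ℝ)+1-j)^M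
              + ((M:ℝ)+1-m) * ∑ j ∈ range m, (-1:ℝ)^j * ((M+1).choose j : ℝ) * ((m:ℝ)-j)^M := by
          exact hkey
        push_cast
        rw [hS]
        have hfac : (((M+1).factorial : ℝ)) = ((M:ℝ)+1) * (M.factorial : ℝ) := by
          rw [Nat.factorial_succ]; push_cast; ring
        rw [hfac]
        field_simp
        ring
  intro N hN n _ _
  exact claim N hN n
end

section
/- Let f : ℕ × ℕ → ℝ satisfy: f(1,2) = 1 and f(1, N+1) = (1 - 1/N)·f(1,N) + 1 for all N ≥ 2; f(k,k) = 1 for all k ≥ 2; f(0,N) = 0 for all N; and the recurrence f(k, N+1) = (1 - k/N)·f(k,N) + ((k-1)/N)·f(k-1,N) for all integers N ≥ 2 and 2 ≤ k ≤ N. Then f(k,N) = N/(k(k+1)) for all integers N ≥ 2 and 1 ≤ k ≤ N-1. (The average degree distribution of a random recursive hypergraph is strictly linear in N with no sub-leading corrections.) -/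
/-! Induction on `N`. The closed form `N / (k (k + 1))` satisfies both recurrences, and at the
top degree `k = N` the coefficient `1 - k / N` vanishes, so the value `f (N, N)` never enters. -/

noncomputable def rrhMeanDegreeCount (k N : ℕ) : ℝ := (N : ℝ) / ((k : ℝ) * ((k : ℝ) + 1))

lemma rrhMeanDegreeCount_one_succ {N : ℕ} (hN : N ≠ 0) :
    rrhMeanDegreeCount 1 (N + 1) = (1 - 1 / (N : ℝ)) * rrhMeanDegreeCount 1 N + 1 := by
  unfold rrhMeanDegreeCount
  push_cast
  field_simp
  ring

lemma rrhMeanDegreeCount_succ {N k : ℕ} (hN : N ≠ 0) (hk : 2 ≤ k) :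
    rrhMeanDegreeCount k (N + 1) =
      (1 - (k : ℝ) / N) * rrhMeanDegreeCount k N +
        ((k : ℝ) - 1) / N * rrhMeanDegreeCount (k - 1) N := by
  obtain ⟨j, rfl⟩ : ∃ j, k = j + 1 := ⟨k - 1, by omega⟩
  have hj : (j : ℝ) ≠ 0 := by norm_cast; omega
  unfold rrhMeanDegreeCount
  push_cast
  simp only [add_sub_cancel_right]
  field_simp
  ring

theorem rrh_average_degree_distribution_general (f : ℕ × ℕ → ℝ)
    (h12 : f (1, 2) = 1)
    (hrec1 : ∀ N : ℕ, 2 ≤ N → f (1, N + 1) = (1 - 1 / (N : ℝ)) * f (1, N) + 1)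
    (hrec : ∀ N : ℕ, 2 ≤ N → ∀ k : ℕ, 2 ≤ k → k ≤ N →
      f (k, N + 1) = (1 - (k : ℝ) / N) * f (k, N) + ((k : ℝ) - 1) / N * f (k - 1, N)) :
    ∀ N : ℕ, 2 ≤ N → ∀ k : ℕ, 1 ≤ k → k ≤ N - 1 →
      f (k, N) = (N : ℝ) / ((k : ℝ) * ((k : ℝ) + 1)) := by
  change ∀ N, 2 ≤ N → ∀ k, 1 ≤ k → k ≤ N - 1 → f (k, N) = rrhMeanDegreeCount k N
  intro N hN
  induction N, hN using Nat.le_induction with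
  | base =>
    intro k hk1 hk2
    obtain rfl : k = 1 := by omega
    rw [h12]
    norm_num [rrhMeanDegreeCount]
  | succ N hN ih =>
    intro k hk1 hk2
    have hN0 : N ≠ 0 := by omega
    rcases hk1.eq_or_lt with rfl | hk
    · rw [hrec1 N hN, ih 1 le_rfl (by omega), rrhMeanDegreeCount_one_succ hN0]
    · have htop : (1 - (k : ℝ) / N) * f (k, N) = (1 - (k : ℝ) / N) * rrhMeanDegreeCount k N := by
        rcases (show k ≤ N by omega).lt_or_eq with _ | rfl
        · rw [ih k hk1 (by omega)]
        · rw [div_self (Nat.cast_ne_zero.mpr hN0 : (k : ℝ) ≠ 0), sub_self, zero_mul, zero_mul]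
      rw [hrec N hN k hk (by omega), htop, ih (k - 1) (by omega) (by omega),
        rrhMeanDegreeCount_succ hN0 hk]

/-- The average degree distribution of an RRH is strictly linear in `N`:
`f(k,N) = N/(k(k+1))` for all `1 ≤ k ≤ N-1`. -/
theorem rrh_average_degree_distribution (f : ℕ × ℕ → ℝ)
    (h12 : f (1, 2) = 1)
    (hrec1 : ∀ N : ℕ, 2 ≤ N → f (1, N + 1) = (1 - 1 / (N : ℝ)) * f (1, N) + 1)
    (hdiag : ∀ k : ℕ, 2 ≤ k → f (k, k) = 1)
    (hzero : ∀ N : ℕ, f (0, N) = 0)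
    (hrec : ∀ N : ℕ, 2 ≤ N → ∀ k : ℕ, 2 ≤ k → k ≤ N →
      f (k, N + 1) = (1 - (k : ℝ) / N) * f (k, N) + ((k : ℝ) - 1) / N * f (k - 1, N)) :
    ∀ N : ℕ, 2 ≤ N → ∀ k : ℕ, 1 ≤ k → k ≤ N - 1 →
      f (k, N) = (N : ℝ) / ((k : ℝ) * ((k : ℝ) + 1)) :=
  rrh_average_degree_distribution_general f h12 hrec1 hrec
end

section
/- Let b : ℕ → ℝ satisfy b(4) = 7/6 and the recurrence b(N+1) = (1 - 3/N)·b(N) + (5N - 3)/12 for all integers N ≥ 4. Then b(N) = N(N-1)/12 + 1/((N-1)(N-2)(N-3)) for all integers N ≥ 4, and consequently the centered correlation b(N) - (N/2)·(N/6) = -N/12 + 1/((N-1)(N-2)(N-3)) for all integers N ≥ 4. (This is the correlation ⟨N₁N₂⟩ between the numbers of degree-one and degree-two vertices in a random recursive hypergraph.) -/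
/-! The closed form `x (x - 1) / 12 + 1 / ((x - 1)(x - 2)(x - 3))` satisfies the recurrence:
the factor `1 - 3 / x = (x - 3) / x` turns the rational part at `x` into the rational part at
`x + 1`, and the polynomial part absorbs the inhomogeneity `(5x - 3) / 12`. Since it also takes
the value `7 / 6` at `4`, induction identifies it with `b`. -/

noncomputable def rrhDegreeOneTwoMoment (x : ℝ) : ℝ :=
  x * (x - 1) / 12 + 1 / ((x - 1) * (x - 2) * (x - 3))

theorem rrhDegreeOneTwoMoment_add_one {x : ℝ} (hx₀ : x ≠ 0) (hx₁ : x - 1 ≠ 0) (hx₂ : x - 2 ≠ 0)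
    (hx₃ : x - 3 ≠ 0) :
    rrhDegreeOneTwoMoment (x + 1) = (1 - 3 / x) * rrhDegreeOneTwoMoment x + (5 * x - 3) / 12 := by
  unfold rrhDegreeOneTwoMoment
  rw [show x + 1 - 1 = x by ring, show x + 1 - 2 = x - 1 by ring, show x + 1 - 3 = x - 2 by ring]
  field_simp
  ring

/-- The correlation `⟨N₁N₂⟩` between the numbers of degree-one and degree-two
vertices in an RRH, and the centered correlation. -/
theorem rrh_degree_one_two_correlation (b : ℕ → ℝ) (h4 : b 4 = 7 / 6)
    (hrec : ∀ N : ℕ, 4 ≤ N →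
      b (N + 1) = (1 - 3 / (N : ℝ)) * b N + (5 * (N : ℝ) - 3) / 12) :
    (∀ N : ℕ, 4 ≤ N →
      b N = (N : ℝ) * ((N : ℝ) - 1) / 12
        + 1 / (((N : ℝ) - 1) * ((N : ℝ) - 2) * ((N : ℝ) - 3))) ∧
    (∀ N : ℕ, 4 ≤ N →
      b N - ((N : ℝ) / 2) * ((N : ℝ) / 6)
        = -(N : ℝ) / 12 + 1 / (((N : ℝ) - 1) * ((N : ℝ) - 2) * ((N : ℝ) - 3))) := by
  have closed_form : ∀ N : ℕ, 4 ≤ N → b N = rrhDegreeOneTwoMoment N := by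
    intro N hN
    induction N, hN using Nat.le_induction with
    | base => norm_num [h4, rrhDegreeOneTwoMoment]
    | succ n hn ih =>
      have hn' : (4 : ℝ) ≤ n := by exact_mod_cast hn
      rw [hrec n hn, ih, Nat.cast_succ, rrhDegreeOneTwoMoment_add_one] <;> linarith
  refine ⟨closed_form, fun N hN => ?_⟩
  rw [closed_form N hN, rrhDegreeOneTwoMoment]
  ring
end

section
/- Let a : ℕ → ℝ satisfy a(2) = 1 and the recurrence a(N+1) = a(N) + 2·H_{N-1}/N + 1/N for all integers N ≥ 2, where H_n = ∑_{i=1}^{n} 1/i. Then a(N) = (H_{N-1})² + H_{N-1} - H_{N-1}^{(2)} for all integers N ≥ 2, where H_n^{(2)} = ∑_{i=1}^{n} 1/i². Consequently a(N) - (H_{N-1})² = H_{N-1} - H_{N-1}^{(2)} for all N ≥ 2. (These are the second moment and variance of the number of rank-two vertices in a random recursive hypergraph of size N.) -/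
/-- The second moment and variance of the number of rank-two vertices in an RRH,
expressed via harmonic and generalized harmonic numbers. -/
theorem rrh_rank_two_second_moment (a : ℕ → ℝ) (h2 : a 2 = 1)
    (hrec : ∀ N : ℕ, 2 ≤ N →
      a (N + 1) = a N + 2 * (∑ i ∈ Finset.Icc 1 (N - 1), (1 : ℝ) / i) / N + 1 / (N : ℝ)) :
    (∀ N : ℕ, 2 ≤ N →
      a N = (∑ i ∈ Finset.Icc 1 (N - 1), (1 : ℝ) / i) ^ 2
        + (∑ i ∈ Finset.Icc 1 (N - 1), (1 : ℝ) / i)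
        - ∑ i ∈ Finset.Icc 1 (N - 1), (1 : ℝ) / (i : ℝ) ^ 2) ∧
    (∀ N : ℕ, 2 ≤ N →
      a N - (∑ i ∈ Finset.Icc 1 (N - 1), (1 : ℝ) / i) ^ 2
        = (∑ i ∈ Finset.Icc 1 (N - 1), (1 : ℝ) / i)
          - ∑ i ∈ Finset.Icc 1 (N - 1), (1 : ℝ) / (i : ℝ) ^ 2) := by
  have main : ∀ N : ℕ, 2 ≤ N →
      a N = (∑ i ∈ Finset.Icc 1 (N - 1), (1 : ℝ) / i) ^ 2
        + (∑ i ∈ Finset.Icc 1 (N - 1), (1 : ℝ) / i)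
        - ∑ i ∈ Finset.Icc 1 (N - 1), (1 : ℝ) / (i : ℝ) ^ 2 := by
    intro N hN
    induction N, hN using Nat.le_induction with
    | base => simp [h2]
    | succ N hN ih =>
      have hN1 : 1 ≤ N := le_trans (by norm_num) hN
      have hsucc : N + 1 - 1 = (N - 1) + 1 := by omega
      have hNmem : N - 1 + 1 = N := by omega
      have h1 : (∑ i ∈ Finset.Icc 1 (N + 1 - 1), (1 : ℝ) / i)
          = (∑ i ∈ Finset.Icc 1 (N - 1), (1 : ℝ) / i) + 1 / N := by
        rw [hsucc, Finset.sum_Icc_succ_top (by omega), hNmem]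
      have h2' : (∑ i ∈ Finset.Icc 1 (N + 1 - 1), (1 : ℝ) / (i : ℝ) ^ 2)
          = (∑ i ∈ Finset.Icc 1 (N - 1), (1 : ℝ) / (i : ℝ) ^ 2) + 1 / (N : ℝ) ^ 2 := by
        rw [hsucc, Finset.sum_Icc_succ_top (by omega), hNmem]
      have hNne : (N : ℝ) ≠ 0 := by positivity
      rw [hrec N hN, ih, h1, h2']
      field_simp
      ring
  refine ⟨main, fun N hN => ?_⟩
  rw [main N hN]; ring
end

section
/- Let Π : ℕ × ℕ → ℝ satisfy: Π(1,2) = 1 and Π(r,2) = 0 for r ≠ 1; Π(0,N) = 0 for all N; and the recurrence Π(r, N+1) = (1/N)·Π(r-1, N) + (1 - 1/N)·Π(r, N) for all integers N ≥ 2 and r ≥ 1. Then for every integer N ≥ 2 and every real x, ∑_{r=1}^{N-1} Π(r,N)·x^r = x(x+1)(x+2)···(x+N-2)/(N-1)!, i.e., Π(r,N) equals the unsigned Stirling number of the first kind [N-1 brack r] divided by (N-1)!. -/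
/-!
Let `G_N(x) = ∑_{r < N} Π(r,N) x^r`. The boundary conditions force `Π(r,N) = 0` for `r = 0` and
for `r ≥ N`, so the recurrence for `Π` becomes `N · G_{N+1}(x) = (x + N - 1) · G_N(x)`: each new
vertex multiplies the generating polynomial by `(x + N - 1)/N`. Starting from `G_2(x) = x`, this
telescopes to `x(x+1)⋯(x+N-2)/(N-1)!`.
-/

open Finset

namespace RRH

noncomputable def genFun (Pr : ℕ × ℕ → ℝ) (N : ℕ) (x : ℝ) : ℝ :=
  ∑ r ∈ range N, Pr (r, N) * x ^ r

variable {Pr : ℕ × ℕ → ℝ}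

theorem eq_zero_of_le (hinit' : ∀ r : ℕ, r ≠ 1 → Pr (r, 2) = 0)
    (hrec : ∀ N : ℕ, 2 ≤ N → ∀ r : ℕ, 1 ≤ r →
      Pr (r, N + 1) = (1 / (N : ℝ)) * Pr (r - 1, N) + (1 - 1 / (N : ℝ)) * Pr (r, N))
    {N : ℕ} (hN : 2 ≤ N) {r : ℕ} (hr : N ≤ r) : Pr (r, N) = 0 := by
  induction N, hN using Nat.le_induction generalizing r with
  | base => exact hinit' r (by omega)
  | succ N hN ih =>
    rw [hrec N hN r (by omega), ih (r := r - 1) (by omega), ih (r := r) (by omega)]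
    ring

theorem sum_Icc_eq_genFun (hzero : ∀ N : ℕ, Pr (0, N) = 0) (N : ℕ) (x : ℝ) :
    ∑ r ∈ Icc 1 (N - 1), Pr (r, N) * x ^ r = genFun Pr N x := by
  rcases N with _ | N
  · simp [genFun]
  · rw [genFun, sum_range_succ', hzero, ← Ico_add_one_right_eq_Icc, sum_Ico_eq_sum_range]
    simp [add_comm]

theorem mul_genFun_succ (hzero : ∀ N : ℕ, Pr (0, N) = 0)
    (hinit' : ∀ r : ℕ, r ≠ 1 → Pr (r, 2) = 0)
    (hrec : ∀ N : ℕ, 2 ≤ N → ∀ r : ℕ, 1 ≤ r →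
      Pr (r, N + 1) = (1 / (N : ℝ)) * Pr (r - 1, N) + (1 - 1 / (N : ℝ)) * Pr (r, N))
    {N : ℕ} (hN : 2 ≤ N) (x : ℝ) :
    N * genFun Pr (N + 1) x = (x + N - 1) * genFun Pr N x := by
  have hshift : ∑ r ∈ range N, Pr (r + 1, N) * x ^ (r + 1) = genFun Pr N x := by
    have h := sum_range_succ' (fun r => Pr (r, N) * x ^ r) N
    rw [sum_range_succ, eq_zero_of_le hinit' hrec hN le_rfl, hzero] at h
    simpa [genFun] using h.symm
  calc (N : ℝ) * genFun Pr (N + 1) x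
      = ∑ r ∈ range N, (x * (Pr (r, N) * x ^ r) + (N - 1) * (Pr (r + 1, N) * x ^ (r + 1))) := by
        rw [genFun, sum_range_succ', hzero, zero_mul, add_zero, mul_sum]
        refine sum_congr rfl fun r _ => ?_
        rw [hrec N hN (r + 1) (by omega), Nat.add_sub_cancel]
        field_simp
        ring
    _ = (x + N - 1) * genFun Pr N x := by
        rw [sum_add_distrib, ← mul_sum, ← mul_sum, hshift, genFun]
        ring

theorem genFun_eq_prod_div_factorial (hinit : Pr (1, 2) = 1)
    (hinit' : ∀ r : ℕ, r ≠ 1 → Pr (r, 2) = 0) (hzero : ∀ N : ℕ, Pr (0, N) = 0)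
    (hrec : ∀ N : ℕ, 2 ≤ N → ∀ r : ℕ, 1 ≤ r →
      Pr (r, N + 1) = (1 / (N : ℝ)) * Pr (r - 1, N) + (1 - 1 / (N : ℝ)) * Pr (r, N))
    {n : ℕ} (hn : 1 ≤ n) (x : ℝ) :
    genFun Pr (n + 1) x = (∏ i ∈ range n, (x + i)) / n.factorial := by
  induction n, hn using Nat.le_induction with
  | base => simp [genFun, sum_range_succ, hzero, hinit]
  | succ n hn ih =>
    have h := mul_genFun_succ hzero hinit' hrec (N := n + 1) (by omega) x
    rw [ih] at h
    rw [prod_range_succ, Nat.factorial_succ]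
    push_cast at h ⊢
    field_simp at h ⊢
    linear_combination h

end RRH

/-- The distribution of the number of size-two edges in an RRH is given by unsigned
Stirling numbers of the first kind: its generating polynomial equals the rising
factorial `x(x+1)⋯(x+N-2)/(N-1)!`. -/
theorem rrh_size_two_edges_stirling (Pr : ℕ × ℕ → ℝ)
    (hinit : Pr (1, 2) = 1) (hinit' : ∀ r : ℕ, r ≠ 1 → Pr (r, 2) = 0)
    (hzero : ∀ N : ℕ, Pr (0, N) = 0)
    (hrec : ∀ N : ℕ, 2 ≤ N → ∀ r : ℕ, 1 ≤ r →
      Pr (r, N + 1) = (1 / (N : ℝ)) * Pr (r - 1, N) + (1 - 1 / (N : ℝ)) * Pr (r, N)) :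
    ∀ N : ℕ, 2 ≤ N → ∀ x : ℝ,
      ∑ r ∈ Finset.Icc 1 (N - 1), Pr (r, N) * x ^ r
        = (∏ i ∈ Finset.range (N - 1), (x + (i : ℝ))) / ((N - 1).factorial : ℝ) := by
  intro N hN x
  obtain ⟨n, rfl⟩ : ∃ n, N = n + 1 := ⟨N - 1, by omega⟩
  rw [RRH.sum_Icc_eq_genFun hzero, Nat.add_sub_cancel,
    RRH.genFun_eq_prod_div_factorial hinit hinit' hzero hrec (by omega)]
end

section
/- Let R : ℕ × ℕ → ℝ satisfy: R(1,N) = 1 for all N ≥ 1; R(k,1) = 0 for all k ≥ 2; and the recurrence R(k, N+1) = R(k,N) + R(k-1,N)/N for all integers N ≥ 1 and k ≥ 2. Then for all integers k ≥ 1 and N ≥ 1, R(k+1, N+1) = ∑_{1 ≤ j₁ < j₂ < … < j_k ≤ N} 1/(j₁·j₂·…·j_k), i.e., R(k+1, N+1) is the elementary symmetric polynomial of degree k in the variables 1, 1/2, …, 1/N. -/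
lemma esymm_step (N k : ℕ) :
    ∑ S ∈ Finset.powersetCard (k+1) (Finset.Icc 1 (N+1)), ∏ j ∈ S, (1:ℝ)/j
      = (∑ S ∈ Finset.powersetCard (k+1) (Finset.Icc 1 N), ∏ j ∈ S, (1:ℝ)/j)
        + (∑ S ∈ Finset.powersetCard k (Finset.Icc 1 N), ∏ j ∈ S, (1:ℝ)/j) / (N+1) := by
  have hmem : (N+1) ∉ Finset.Icc 1 N := by simp
  have hins : Finset.Icc 1 (N+1) = insert (N+1) (Finset.Icc 1 N) := by
    ext x; simp [Finset.mem_Icc]; omega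
  rw [hins, Finset.powersetCard_succ_insert hmem, Finset.sum_union]
  · congr 1
    rw [Finset.sum_image]
    · rw [Finset.sum_div]
      refine Finset.sum_congr rfl ?_
      intro S hS
      have hS' : (N+1) ∉ S := fun h => hmem (Finset.mem_powersetCard.1 hS |>.1 h)
      rw [Finset.prod_insert hS']
      push_cast
      ring
    · intro S hS T hT hST
      have hS' : (N+1) ∉ S := fun h => hmem (Finset.mem_powersetCard.1 hS |>.1 h)
      have hT' : (N+1) ∉ T := fun h => hmem (Finset.mem_powersetCard.1 hT |>.1 h)
      rw [← Finset.erase_insert hS', ← Finset.erase_insert hT', hST]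
  · rw [Finset.disjoint_right]
    intro S hS hS'
    obtain ⟨T, hT, rfl⟩ := Finset.mem_image.1 hS
    have := (Finset.mem_powersetCard.1 hS').1 (Finset.mem_insert_self _ _)
    exact hmem this

/-- The average number of rank-`(k+1)` vertices in an RRH of size `N+1` equals the
elementary symmetric polynomial of degree `k` in `1, 1/2, …, 1/N`. -/
theorem rrh_rank_distribution_elementary_symmetric (R : ℕ × ℕ → ℝ)
    (h1 : ∀ N : ℕ, 1 ≤ N → R (1, N) = 1)
    (h2 : ∀ k : ℕ, 2 ≤ k → R (k, 1) = 0)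
    (hrec : ∀ N : ℕ, 1 ≤ N → ∀ k : ℕ, 2 ≤ k →
      R (k, N + 1) = R (k, N) + R (k - 1, N) / N) :
    ∀ k : ℕ, 1 ≤ k → ∀ N : ℕ, 1 ≤ N →
      R (k + 1, N + 1)
        = ∑ S ∈ Finset.powersetCard k (Finset.Icc 1 N), ∏ j ∈ S, (1 : ℝ) / j := by
  suffices H : ∀ N : ℕ, 1 ≤ N → ∀ k : ℕ, 1 ≤ k →
      R (k + 1, N + 1) = ∑ S ∈ Finset.powersetCard k (Finset.Icc 1 N), ∏ j ∈ S, (1:ℝ)/j by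
    intro k hk N hN; exact H N hN k hk
  intro N hN
  induction N, hN using Nat.le_induction with
  | base =>
    intro k hk
    rw [hrec 1 le_rfl (k+1) (by omega)]
    simp only [Nat.add_sub_cancel]
    rcases Nat.lt_or_ge k 2 with hk2 | hk2
    · interval_cases k
      rw [h2 2 le_rfl, h1 1 le_rfl]
      have : Finset.powersetCard 1 ({1} : Finset ℕ) = {{1}} := by decide
      rw [Finset.Icc_self, this]
      norm_num
    · rw [h2 (k+1) (by omega), h2 k hk2]
      have : Finset.powersetCard k (Finset.Icc 1 1) = ∅ := by
        rw [Finset.powersetCard_eq_empty]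
        simp; omega
      rw [this]
      norm_num
  | succ n hn IH =>
    intro k hk
    rw [hrec (n+1) (by omega) (k+1) (by omega)]
    simp only [Nat.add_sub_cancel]
    rcases Nat.lt_or_ge k 2 with hk2 | hk2
    · interval_cases k
      rw [h1 (n+1) (by omega), IH 1 le_rfl, esymm_step n 0]
      simp
    · have hk1 : k - 1 + 1 = k := by omega
      have hIH := IH (k-1) (by omega)
      rw [hk1] at hIH
      rw [IH k (by omega), hIH]
      have hstep := esymm_step n (k-1)
      rw [hk1] at hstep
      rw [hstep]
      push_cast
      ring
end

section
/- Fix an integer m ≥ 2, and let f : ℕ × ℕ → ℝ satisfy: f(1,m) = 1 and f(d,m) = 0 for d ≠ 1; f(0,N) = 0 for all N; and the recurrence f(d, N+1) = ((d-1)/N)·f(d-1,N) + ((N-d)/N)·f(d,N) for all integers N ≥ m and d ≥ 1. Then for all integers N ≥ m and 1 ≤ d ≤ N-m+1, f(d,N) = (m-1)·(N-d-1)!·(N-m)! / ((N-d-m+1)!·(N-1)!). In particular, for m = 2 the distribution is uniform: f(d,N) = 1/(N-1) for 1 ≤ d ≤ N-1. -/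
lemma fact_cast_ne (n : ℕ) : ((n.factorial : ℝ)) ≠ 0 :=
  Nat.cast_ne_zero.mpr (Nat.factorial_pos n).ne'

lemma rrh_aux (a : ℕ) (f : ℕ × ℕ → ℝ)
    (hinit : f (1, a + 2) = 1) (hinit' : ∀ d : ℕ, d ≠ 1 → f (d, a + 2) = 0)
    (hzero : ∀ N : ℕ, f (0, N) = 0)
    (hrec : ∀ N : ℕ, a + 2 ≤ N → ∀ d : ℕ, 1 ≤ d →
      f (d, N + 1) = ((d : ℝ) - 1) / N * f (d - 1, N) + ((N : ℝ) - d) / N * f (d, N)) :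
    ∀ k : ℕ,
      (∀ i j : ℕ, i + j = k →
        f (j + 1, a + 2 + k) = ((a : ℝ) + 1) * ((a + i).factorial : ℝ) * (k.factorial : ℝ)
          / ((i.factorial : ℝ) * ((a + 1 + k).factorial : ℝ))) ∧
      (∀ d : ℕ, k + 2 ≤ d → f (d, a + 2 + k) = 0) := by
  intro k
  induction k with
  | zero =>
    constructor
    · intro i j hij
      obtain ⟨rfl, rfl⟩ : i = 0 ∧ j = 0 := by omega
      simp only [Nat.add_zero, hinit, Nat.factorial_zero]
      rw [show a + 1 = a + 1 from rfl]
      have h1 : ((a + 1).factorial : ℝ) = ((a:ℝ) + 1) * (a.factorial : ℝ) := by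
        rw [Nat.factorial_succ]; push_cast; ring
      rw [h1]
      field_simp
    · intro d hd
      exact hinit' d (by omega)
  | succ k ih =>
    have hN : a + 2 ≤ a + 2 + k := by omega
    have hNR : ((a : ℝ) + 2 + k) ≠ 0 := by positivity
    have hcast : ((a + 2 + k : ℕ) : ℝ) = (a : ℝ) + 2 + k := by push_cast; ring
    constructor
    · intro i j hij
      match j with
      | 0 =>
        have hi : i = k + 1 := by omega
        subst hi
        have hr := hrec (a + 2 + k) hN 1 le_rfl
        rw [show a + 2 + (k + 1) = (a + 2 + k) + 1 from rfl, hr, hzero, hcast]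
        have h1 := (ih.1 k 0 (by omega))
        rw [h1]
        have F1 : ((a + (k+1)).factorial : ℝ) = ((a:ℝ)+1+k) * ((a + k).factorial : ℝ) := by
          rw [show a + (k+1) = (a+k)+1 from rfl, Nat.factorial_succ]; push_cast; ring
        have F2 : ((k+1).factorial : ℝ) = ((k:ℝ)+1) * (k.factorial : ℝ) := by
          rw [Nat.factorial_succ]; push_cast; ring
        have F3 : ((a + 1 + (k+1)).factorial : ℝ) = ((a:ℝ)+2+k) * ((a + 1 + k).factorial : ℝ) := by
          rw [show a + 1 + (k+1) = (a+1+k)+1 from rfl, Nat.factorial_succ]; push_cast; ring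
        rw [F1, F2, F3]
        push_cast
        field_simp
        ring
      | (j' + 1) =>
        have hij' : i + j' = k := by omega
        have hr := hrec (a + 2 + k) hN (j' + 2) (by omega)
        rw [show a + 2 + (k + 1) = (a + 2 + k) + 1 from rfl, show j' + 1 + 1 = j' + 2 from rfl,
          hr, show j' + 2 - 1 = j' + 1 from rfl, hcast]
        have h1 := ih.1 i j' hij'
        rw [h1]
        match i with
        | 0 =>
          have hz : f (j' + 2, a + 2 + k) = 0 := ih.2 (j' + 2) (by omega)
          rw [hz]
          have F2 : ((k+1).factorial : ℝ) = ((k:ℝ)+1) * (k.factorial : ℝ) := by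
            rw [Nat.factorial_succ]; push_cast; ring
          have F3 : ((a + 1 + (k+1)).factorial : ℝ) = ((a:ℝ)+2+k) * ((a + 1 + k).factorial : ℝ) := by
            rw [show a + 1 + (k+1) = (a+1+k)+1 from rfl, Nat.factorial_succ]; push_cast; ring
          rw [F2, F3]
          have hj : (j' : ℝ) + 2 - 1 = (k:ℝ) + 1 := by
            have : j' = k := by omega
            subst this; ring
          push_cast
          rw [hj]
          field_simp
          ring
        | (i' + 1) =>
          have h2 := ih.1 i' (j' + 1) (by omega)
          rw [h2]
          have F1 : ((a + (i'+1)).factorial : ℝ) = ((a:ℝ)+1+i') * ((a + i').factorial : ℝ) := by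
            rw [show a + (i'+1) = (a+i')+1 from rfl, Nat.factorial_succ]; push_cast; ring
          have F2 : ((k+1).factorial : ℝ) = ((k:ℝ)+1) * (k.factorial : ℝ) := by
            rw [Nat.factorial_succ]; push_cast; ring
          have F3 : ((a + 1 + (k+1)).factorial : ℝ) = ((a:ℝ)+2+k) * ((a + 1 + k).factorial : ℝ) := by
            rw [show a + 1 + (k+1) = (a+1+k)+1 from rfl, Nat.factorial_succ]; push_cast; ring
          have F4 : ((i'+1).factorial : ℝ) = ((i':ℝ)+1) * (i'.factorial : ℝ) := by
            rw [Nat.factorial_succ]; push_cast; ring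
          have hk : (k : ℝ) = (i' : ℝ) + 1 + j' := by
            have : i' + 1 + j' = k := hij'
            push_cast [← this]; ring
          rw [F1, F2, F3, F4]
          push_cast
          rw [hk]
          have hi'ne : ((i':ℝ) + 1) ≠ 0 := by positivity
          field_simp
          ring
    · intro d hd
      have hd1 : 1 ≤ d := by omega
      have hr := hrec (a + 2 + k) hN d hd1
      rw [show a + 2 + (k + 1) = (a + 2 + k) + 1 from rfl, hr,
        ih.2 (d - 1) (by omega), ih.2 d (by omega)]
      ring


/-- The degree distribution of the `m`-th vertex in an RRH:
`P_m(d,N) = (m-1)(N-d-1)!(N-m)!/((N-d-m+1)!(N-1)!)`; in particular, for `m = 2`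
the distribution is uniform. -/
theorem rrh_mth_vertex_degree_distribution (m : ℕ) (hm : 2 ≤ m) (f : ℕ × ℕ → ℝ)
    (hinit : f (1, m) = 1) (hinit' : ∀ d : ℕ, d ≠ 1 → f (d, m) = 0)
    (hzero : ∀ N : ℕ, f (0, N) = 0)
    (hrec : ∀ N : ℕ, m ≤ N → ∀ d : ℕ, 1 ≤ d →
      f (d, N + 1) = ((d : ℝ) - 1) / N * f (d - 1, N) + ((N : ℝ) - d) / N * f (d, N)) :
    (∀ N : ℕ, m ≤ N → ∀ d : ℕ, 1 ≤ d → d ≤ N - m + 1 →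
      f (d, N) = ((m : ℝ) - 1) * ((N - d - 1).factorial : ℝ) * ((N - m).factorial : ℝ)
        / (((N - d - (m - 1)).factorial : ℝ) * ((N - 1).factorial : ℝ))) ∧
    (m = 2 → ∀ N : ℕ, 2 ≤ N → ∀ d : ℕ, 1 ≤ d → d ≤ N - 1 →
      f (d, N) = 1 / ((N : ℝ) - 1)) := by
  obtain ⟨a, rfl⟩ : ∃ a, m = a + 2 := ⟨m - 2, by omega⟩
  have key := rrh_aux a f hinit hinit' hzero hrec
  have main : ∀ N : ℕ, a + 2 ≤ N → ∀ d : ℕ, 1 ≤ d → d ≤ N - (a + 2) + 1 →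
      f (d, N) = ((a : ℝ) + 2 - 1) * ((N - d - 1).factorial : ℝ) * ((N - (a + 2)).factorial : ℝ)
        / (((N - d - (a + 2 - 1)).factorial : ℝ) * ((N - 1).factorial : ℝ)) := by
    intro N hN d hd1 hd2
    set k := N - (a + 2) with hk
    set j := d - 1 with hj
    set i := k - j with hi
    have e1 : N = a + 2 + k := by omega
    have e2 : d = j + 1 := by omega
    have hijk : i + j = k := by omega
    have h := (key k).1 i j hijk
    rw [e1, e2, h]
    have n1 : a + 2 + k - (j + 1) - 1 = a + i := by omega
    have n2 : a + 2 + k - (a + 2) = k := by omega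
    have n3 : a + 2 + k - (j + 1) - (a + 2 - 1) = i := by omega
    have n4 : a + 2 + k - 1 = a + 1 + k := by omega
    rw [n1, n3, n4]
    ring
  constructor
  · intro N hN d h1 h2; rw [main N hN d h1 h2]; push_cast; ring
  · intro hm2 N hN d hd1 hd2
    obtain rfl : a = 0 := by omega
    have h := main N hN d hd1 (by omega)
    rw [h]
    have n1 : N - d - 1 = N - d - (0 + 2 - 1) := by omega
    rw [← n1]
    have n4 : N - 1 = (N - 2) + 1 := by omega
    rw [n4, Nat.factorial_succ, show N - (0+2) = N - 2 from rfl]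
    have hNd : ((N - 2 : ℕ) : ℝ) + 1 = (N : ℝ) - 1 := by
      have : ((N - 2 : ℕ) : ℝ) = (N : ℝ) - 2 := by
        push_cast [Nat.cast_sub (by omega : 2 ≤ N)]; ring
      rw [this]; ring
    push_cast
    rw [hNd]
    have hfne : ((N - d - 1).factorial : ℝ) ≠ 0 := Nat.cast_ne_zero.mpr (Nat.factorial_pos _).ne'
    have hfne2 : (((N-2).factorial : ℕ) : ℝ) ≠ 0 := Nat.cast_ne_zero.mpr (Nat.factorial_pos _).ne'
    have hN1 : (N : ℝ) - 1 ≠ 0 := by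
      have : (2:ℝ) ≤ N := by exact_mod_cast hN
      linarith
    field_simp
    ring
end

section
/- Let ℓ : ℕ → ℝ satisfy ℓ(0) = ℓ(1), the recurrence ℓ(k+1) = ℓ(k) - ℓ(k-1)/(k+1) for all integers k ≥ 1, and suppose the series ∑_{k=0}^{∞} ℓ(k) converges with sum 1. Then ℓ(k) = e^{-1}/k! for all integers k ≥ 0. (This is the limiting probability distribution of the number of leaves in a random recursive hypergraph as its size tends to infinity.) -/
/-! The recurrence, started from `ℓ 0 = ℓ 1`, forces `ℓ k = ℓ 0 / k!`; the normalisation then reads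
`ℓ 0 · e = 1`, since `∑ 1/k! = e`. -/

open Nat

theorem eq_div_factorial_of_recurrence {K : Type*} [Field K] [CharZero K] (ℓ : ℕ → K)
    (h01 : ℓ 0 = ℓ 1) (hrec : ∀ n : ℕ, ℓ (n + 2) = ℓ (n + 1) - ℓ n / ((n : K) + 2)) (k : ℕ) :
    ℓ k = ℓ 0 / k ! := by
  induction k using Nat.twoStepInduction with
  | zero => simp
  | one => simp [← h01]
  | more n ih ih' =>
    have hfac₁ : ((n + 1)! : K) = (n + 1) * n ! := by push_cast [Nat.factorial_succ]; ring
    have hfac₂ : ((n + 2)! : K) = (n + 2) * (n + 1) * n ! := by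
      push_cast [Nat.factorial_succ]; ring
    have hn₂ : (n : K) + 2 ≠ 0 := by exact_mod_cast (n + 1).succ_ne_zero
    rw [hrec, ih, ih', hfac₁, hfac₂]
    field_simp
    ring

theorem Real.hasSum_inv_factorial : HasSum (fun n : ℕ => ((n ! : ℝ))⁻¹) (Real.exp 1) := by
  simpa [Real.exp_eq_exp_ℝ] using NormedSpace.expSeries_div_hasSum_exp (1 : ℝ)

/-- The limiting distribution of the number of leaves in an RRH is Poisson with
parameter one: `ℓ(k) = e⁻¹/k!`. -/
theorem rrh_leaves_poisson (ℓ : ℕ → ℝ) (h01 : ℓ 0 = ℓ 1)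
    (hrec : ∀ k : ℕ, 1 ≤ k → ℓ (k + 1) = ℓ k - ℓ (k - 1) / ((k : ℝ) + 1))
    (hsum : Filter.Tendsto (fun n : ℕ => ∑ k ∈ Finset.range n, ℓ k)
      Filter.atTop (nhds 1)) :
    ∀ k : ℕ, ℓ k = Real.exp (-1) / (k.factorial : ℝ) := by
  have hℓ : ∀ k, ℓ k = ℓ 0 / k ! := eq_div_factorial_of_recurrence ℓ h01 fun n => by
    rw [show (n : ℝ) + 2 = ((n + 1 : ℕ) : ℝ) + 1 by push_cast; ring]
    exact hrec (n + 1) (by omega)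
  have hsum' : HasSum (fun k => ℓ 0 / k !) (ℓ 0 * Real.exp 1) := by
    simpa only [div_eq_mul_inv] using Real.hasSum_inv_factorial.mul_left (ℓ 0)
  rw [← funext hℓ] at hsum'
  have hnorm : ℓ 0 * Real.exp 1 = 1 := tendsto_nhds_unique hsum'.tendsto_sum_nat hsum
  have hℓ0 : ℓ 0 = Real.exp (-1) := by
    rw [Real.exp_neg]
    exact eq_inv_of_mul_eq_one_left hnorm
  intro k
  rw [hℓ k, hℓ0]
end

section
/- Fix a real number r with 0 < r < 1, and let a : ℕ → ℝ satisfy a(2) = 1 and the recurrence a(N+1) = (1 - (1-r)/N)·a(N) + 1 for all integers N ≥ 2. Then a(N) = N/(2-r) - Γ(N-1+r) / ((2-r)·Γ(r)·Γ(N)) for all integers N ≥ 2, where Γ denotes the Gamma function. (This is the average number of degree-one vertices in the redirection-deformed random recursive hypergraph, which is no longer strictly linear in N: the sub-leading term vanishes as N^{-(1-r)}.) -/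
/-!
`N / (2 - r)` solves the inhomogeneous recurrence, and `Γ(N - 1 + r) / Γ(N)` solves the
homogeneous one, since `Γ(x + 1) = x Γ(x)` turns its ratio of consecutive terms into
`(N - 1 + r) / N = 1 - (1 - r) / N`. The coefficient `-1 / ((2 - r) Γ(r))` fits the value at `N = 2`,
and a first-order recurrence determines the sequence from its initial value.
-/

open Real

theorem Nat.forall_le_eq_of_recurrence {α : Type*} (f : ℕ → α → α) {a b : ℕ → α} {m : ℕ}
    (ha : ∀ N, m ≤ N → a (N + 1) = f N (a N)) (hb : ∀ N, m ≤ N → b (N + 1) = f N (b N))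
    (hm : a m = b m) : ∀ N, m ≤ N → a N = b N := by
  intro N hN
  induction N, hN using Nat.le_induction with
  | base => exact hm
  | succ N hN ih => rw [ha N hN, hb N hN, ih]

noncomputable def degreeOneMean (r x : ℝ) : ℝ :=
  x / (2 - r) - Gamma (x - 1 + r) / ((2 - r) * Gamma r * Gamma x)

lemma degreeOneMean_two {r : ℝ} (hr : 0 < r) (hr2 : r ≠ 2) : degreeOneMean r 2 = 1 := by
  have h2r : 2 - r ≠ 0 := sub_ne_zero.mpr hr2.symm
  have hGr : Gamma r ≠ 0 := (Gamma_pos_of_pos hr).ne'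
  rw [degreeOneMean, show (2 : ℝ) - 1 + r = r + 1 by ring, Gamma_add_one hr.ne', Gamma_two]
  field_simp

lemma degreeOneMean_add_one {r x : ℝ} (hr : 0 < r) (hr2 : r ≠ 2) (hx : 1 ≤ x) :
    degreeOneMean r (x + 1) = (1 - (1 - r) / x) * degreeOneMean r x + 1 := by
  have h2r : 2 - r ≠ 0 := sub_ne_zero.mpr hr2.symm
  have hx0 : 0 < x := by linarith
  have hxr : x - 1 + r ≠ 0 := by linarith
  have hGr : Gamma r ≠ 0 := (Gamma_pos_of_pos hr).ne'
  have hGx : Gamma x ≠ 0 := (Gamma_pos_of_pos hx0).ne'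
  rw [degreeOneMean, degreeOneMean, show x + 1 - 1 + r = x - 1 + r + 1 by ring,
    Gamma_add_one hxr, Gamma_add_one hx0.ne']
  field_simp
  ring

/-- The average number of degree-one vertices in the redirection-deformed RRH:
`a(N) = N/(2-r) - Γ(N-1+r)/((2-r)Γ(r)Γ(N))`. -/
theorem rrh_redirection_degree_one_mean (r : ℝ) (hr0 : 0 < r) (hr1 : r < 1)
    (a : ℕ → ℝ) (h2 : a 2 = 1)
    (hrec : ∀ N : ℕ, 2 ≤ N → a (N + 1) = (1 - (1 - r) / (N : ℝ)) * a N + 1) :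
    ∀ N : ℕ, 2 ≤ N →
      a N = (N : ℝ) / (2 - r)
        - Real.Gamma ((N : ℝ) - 1 + r) / ((2 - r) * Real.Gamma r * Real.Gamma (N : ℝ)) := by
  have hr2 : r ≠ 2 := by linarith
  refine Nat.forall_le_eq_of_recurrence (fun N y => (1 - (1 - r) / N) * y + 1) hrec
    (b := fun N => degreeOneMean r N) (fun N hN => ?_) ?_
  · have hN1 : (1 : ℝ) ≤ N := by exact_mod_cast (by omega : 1 ≤ N)
    simpa using degreeOneMean_add_one hr0 hr2 hN1
  · simpa [h2] using (degreeOneMean_two hr0 hr2).symm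
end

section
/- Fix a real number r with 0 < r < 1, and let n : ℕ → ℝ satisfy n(1) = 1/(2-r) and the recurrence (k - r + 1)·n(k) = (k - 1 - r)·n(k-1) for all integers k ≥ 2. Then n(k) = (1-r) / ((k - r + 1)(k - r)) for all integers k ≥ 1. (This is the stationary degree distribution of the redirection-deformed random recursive hypergraph, decaying algebraically as k^{-2}.) -/
/-- The stationary degree distribution of the redirection-deformed RRH:
`n(k) = (1-r)/((k-r+1)(k-r))`. -/
theorem rrh_redirection_degree_distribution (r : ℝ) (hr0 : 0 < r) (hr1 : r < 1)
    (n : ℕ → ℝ) (h1 : n 1 = 1 / (2 - r))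
    (hrec : ∀ k : ℕ, 2 ≤ k → ((k : ℝ) - r + 1) * n k = ((k : ℝ) - 1 - r) * n (k - 1)) :
    ∀ k : ℕ, 1 ≤ k → n k = (1 - r) / (((k : ℝ) - r + 1) * ((k : ℝ) - r)) := by
  intro k hk
  induction k with
  | zero => omega
  | succ m ih =>
    rcases Nat.eq_or_lt_of_le hk with h | h
    · -- m+1 = 1
      have hm : m = 0 := by omega
      subst hm
      rw [h1]
      have h2 : (2 : ℝ) - r ≠ 0 := by linarith
      have h3 : (1 : ℝ) - r ≠ 0 := by linarith
      push_cast
      rw [div_eq_div_iff h2 (mul_ne_zero (by linarith) h3)]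
      ring
    · have hm : 1 ≤ m := by omega
      have key := hrec (m + 1) (by omega)
      have hprev := ih hm
      simp only [Nat.add_sub_cancel] at key
      rw [hprev] at key
      have hpos1 : ((m : ℝ) + 1) - r + 1 ≠ 0 := by
        have : (1 : ℝ) ≤ m := by exact_mod_cast hm
        nlinarith
      have hpos2 : ((m : ℝ)) - r + 1 ≠ 0 := by
        have : (1 : ℝ) ≤ m := by exact_mod_cast hm
        nlinarith
      have hpos3 : ((m : ℝ)) - r ≠ 0 := by
        have : (1 : ℝ) ≤ m := by exact_mod_cast hm
        nlinarith
      have hpos4 : ((m : ℝ) + 1) - r ≠ 0 := by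
        have : (1 : ℝ) ≤ m := by exact_mod_cast hm
        nlinarith
      push_cast at key ⊢
      have : n (m + 1) = ((m : ℝ) + 1 - 1 - r) * ((1 - r) / (((m : ℝ) - r + 1) * ((m : ℝ) - r))) / ((m : ℝ) + 1 - r + 1) := by
        field_simp at key ⊢
        linarith [key]
      rw [this, mul_div_assoc', div_div,
        div_eq_div_iff (mul_ne_zero (mul_ne_zero hpos2 hpos3) hpos1) (mul_ne_zero hpos1 hpos4)]
      ring
end

section
/- Fix a real number r with 0 < r < 1, and let a : ℕ → ℝ satisfy a(1) = 0 and the recurrence a(N+1) = (1 + r/N)·a(N) + 1/N for all integers N ≥ 1. Then a(N) = (1/r)·(Γ(N+r)/(Γ(1+r)·Γ(N)) - 1) for all integers N ≥ 1, where Γ denotes the Gamma function. (This is the average number of rank-two vertices in the redirection-deformed random recursive hypergraph, which grows algebraically as N^r/(r·Γ(1+r)) rather than logarithmically.) -/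
/-- The average number of rank-two vertices in the redirection-deformed RRH:
`a(N) = (1/r)(Γ(N+r)/(Γ(1+r)Γ(N)) - 1)`. -/
theorem rrh_redirection_rank_two_mean (r : ℝ) (hr0 : 0 < r) (hr1 : r < 1)
    (a : ℕ → ℝ) (h1 : a 1 = 0)
    (hrec : ∀ N : ℕ, 1 ≤ N → a (N + 1) = (1 + r / (N : ℝ)) * a N + 1 / (N : ℝ)) :
    ∀ N : ℕ, 1 ≤ N →
      a N = (1 / r) * (Real.Gamma ((N : ℝ) + r) / (Real.Gamma (1 + r) * Real.Gamma (N : ℝ)) - 1) := by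
  intro N hN
  induction N with
  | zero => omega
  | succ n ih =>
    rcases Nat.eq_or_lt_of_le hN with h | h
    · -- n + 1 = 1
      have hn : n = 0 := by omega
      subst hn
      have hC : Real.Gamma (1 + r) ≠ 0 := ne_of_gt (Real.Gamma_pos_of_pos (by linarith))
      simp [h1, Real.Gamma_one, div_self hC]
    · have hn1 : 1 ≤ n := by omega
      have hih := ih hn1
      have hnpos : (0 : ℝ) < n := by exact_mod_cast hn1
      have hC : Real.Gamma (1 + r) ≠ 0 :=
        ne_of_gt (Real.Gamma_pos_of_pos (by linarith))
      have hGn : Real.Gamma (n : ℝ) ≠ 0 :=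
        ne_of_gt (Real.Gamma_pos_of_pos hnpos)
      have hGs : Real.Gamma ((n : ℝ) + 1) = (n : ℝ) * Real.Gamma (n : ℝ) := by
        rw [Real.Gamma_add_one (ne_of_gt hnpos)]
      have hGr : Real.Gamma ((n : ℝ) + r + 1) = ((n : ℝ) + r) * Real.Gamma ((n : ℝ) + r) := by
        rw [Real.Gamma_add_one (by positivity)]
      have hcast : ((n + 1 : ℕ) : ℝ) = (n : ℝ) + 1 := by push_cast; ring
      rw [hrec n hn1, hih, hcast]
      rw [show (n : ℝ) + 1 + r = (n : ℝ) + r + 1 by ring, hGr, hGs]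
      field_simp
      ring
end
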